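/- arXiv:2302.04515 — 5 statements merged into one kernel-verified Lean document; each statement's English description precedes it below -/
import Mathlib

section
/- If A is an n×n s-quasiseparable matrix and B is an n×n t-quasiseparable matrix over a field K, then the product A·B is (s+t)-quasiseparable. -/
/-- An `n×n` matrix `A` over a field `K` is `s`-quasiseparable if for all `k ∈ {1,…,n}`,
the submatrix `A[1..k, k+1..n]` has rank at most `s` and `A[k+1..n, 1..k]` has rank at most `s`.
(0-based: rows `< k`, columns `≥ k`.) -/
def IsQuasiseparable {K : Type*} [Field K] {n : ℕ} (s : ℕ)
    (A : Matrix (Fin n) (Fin n) K) : Prop :=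
  ∀ k : ℕ, k ≤ n →
    (A.submatrix (fun i : {i : Fin n // (i : ℕ) < k} => i.1)
        (fun j : {j : Fin n // k ≤ (j : ℕ)} => j.1)).rank ≤ s ∧
    (A.submatrix (fun i : {i : Fin n // k ≤ (i : ℕ)} => i.1)
        (fun j : {j : Fin n // (j : ℕ) < k} => j.1)).rank ≤ s

/-- Rank is subadditive. -/
theorem my_rank_add_le {K : Type*} [Field K] {m p : Type*} [Fintype m] [Fintype p]
    (A B : Matrix m p K) : (A + B).rank ≤ A.rank + B.rank := by
  rw [Matrix.rank, Matrix.rank, Matrix.rank, Matrix.mulVecLin_add]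
  have hle : LinearMap.range (A.mulVecLin + B.mulVecLin) ≤
      LinearMap.range A.mulVecLin ⊔ LinearMap.range B.mulVecLin := by
    rintro x ⟨y, rfl⟩
    exact Submodule.add_mem_sup ⟨y, rfl⟩ ⟨y, rfl⟩
  exact le_trans (Submodule.finrank_mono hle)
    (Submodule.finrank_add_le_finrank_add_finrank _ _)

/-- Splitting the product over the column index `k`. -/
theorem mul_submatrix_split {K : Type*} [Field K] {n : ℕ} (k : ℕ)
    (A B : Matrix (Fin n) (Fin n) K) {I J : Type*} (f : I → Fin n) (g : J → Fin n) :
    (A * B).submatrix f g =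
      A.submatrix f (fun l : {l : Fin n // (l : ℕ) < k} => l.1) *
        B.submatrix (fun l : {l : Fin n // (l : ℕ) < k} => l.1) g +
      A.submatrix f (fun l : {l : Fin n // k ≤ (l : ℕ)} => l.1) *
        B.submatrix (fun l : {l : Fin n // k ≤ (l : ℕ)} => l.1) g := by
  ext i j
  simp only [Matrix.submatrix_apply, Matrix.mul_apply, Matrix.add_apply]
  rw [← Fintype.sum_subtype_add_sum_subtype (fun l : Fin n => (l : ℕ) < k)
      (fun l => A (f i) l * B l (g j))]
  congr 1
  exact Fintype.sum_equiv
    ((Equiv.subtypeEquivRight (fun x => not_lt)) :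
      {l : Fin n // ¬ (l : ℕ) < k} ≃ {l : Fin n // k ≤ (l : ℕ)})
    (fun l => A (f i) l.1 * B l.1 (g j))
    (fun l => A (f i) l.1 * B l.1 (g j)) (fun x => rfl)

/-- The product of an `s`-quasiseparable and a `t`-quasiseparable matrix is
`(s+t)`-quasiseparable. -/
theorem isQuasiseparable_mul {K : Type*} [Field K] {n : ℕ} {s t : ℕ}
    (A B : Matrix (Fin n) (Fin n) K)
    (hA : IsQuasiseparable s A) (hB : IsQuasiseparable t B) :
    IsQuasiseparable (s + t) (A * B) := by
  intro k hk
  constructor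
  · rw [mul_submatrix_split k]
    refine le_trans (my_rank_add_le _ _) ?_
    rw [add_comm s t]
    exact add_le_add
      (le_trans (Matrix.rank_mul_le_right _ _) (hB k hk).1)
      (le_trans (Matrix.rank_mul_le_left _ _) (hA k hk).1)
  · rw [mul_submatrix_split k]
    refine le_trans (my_rank_add_le _ _) ?_
    exact add_le_add
      (le_trans (Matrix.rank_mul_le_left _ _) (hA k hk).2)
      (le_trans (Matrix.rank_mul_le_right _ _) (hB k hk).2)
end

section
/- Given an (s,2s)-SSS generator for an n×n matrix A on a grid of N = n/s blocks of size s×s (with generator matrices P_i ∈ K^{s×2s}, Q_i ∈ K^{2s×s}, R_i ∈ K^{2s×2s}, U_i ∈ K^{s×2s}, V_i ∈ K^{2s×s}, W_i ∈ K^{2s×2s}, D_i ∈ K^{s×s}), the merged matrices P'_i = [P_{2i-1}; P_{2i} R_{2i-1}], Q'_i = [R_{2i} Q_{2i-1} Q_{2i}], R'_i = R_{2i} R_{2i-1}, U'_i = [U_{2i-1} W_{2i}; U_{2i}], V'_i = [V_{2i-1} W_{2i-1} V_{2i}], W'_i = W_{2i-1} W_{2i}, D'_i = [[D_{2i-1},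 U_{2i-1} V_{2i}], [P_{2i} Q_{2i-1}, D_{2i}]] form a 2s-SSS generator for A on the coarser grid of 2s×2s blocks. -/
/-- The `t×t` block of `A` at (0-based) block position `(i, j)` (junk `0` out of range). -/
def blk {K : Type*} [Field K] {n : ℕ} (t : ℕ) (A : Matrix (Fin n) (Fin n) K)
    (i j : ℕ) : Matrix (Fin t) (Fin t) K :=
  fun a b =>
    if h : i * t + (a : ℕ) < n ∧ j * t + (b : ℕ) < n then
      A ⟨i * t + (a : ℕ), h.1⟩ ⟨j * t + (b : ℕ), h.2⟩
    else 0

/-- Descending chain product `R_{j+m} * R_{j+m-1} * ⋯ * R_{j+1}` (with `m` factors). -/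
def chainDesc {K : Type*} [Field K] {m' : Type*} [Fintype m'] [DecidableEq m']
    (R : ℕ → Matrix m' m' K) (j : ℕ) : ℕ → Matrix m' m' K
  | 0 => 1
  | m + 1 => R (j + m + 1) * chainDesc R j m

/-- Ascending chain product `W_{i+1} * W_{i+2} * ⋯ * W_{i+m}` (with `m` factors). -/
def chainAsc {K : Type*} [Field K] {m' : Type*} [Fintype m'] [DecidableEq m']
    (W : ℕ → Matrix m' m' K) (i : ℕ) : ℕ → Matrix m' m' K
  | 0 => 1
  | m + 1 => chainAsc W i m * W (i + m + 1)

/-- Horizontal concatenation `[X Y]`. -/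
def hcat {K : Type*} {m p q : Type*} (X : Matrix m p K) (Y : Matrix m q K) :
    Matrix m (p ⊕ q) K :=
  fun i => Sum.elim (X i) (Y i)

/-- Vertical concatenation `[X; Y]`. -/
def vcat {K : Type*} {m p q : Type*} (X : Matrix p m K) (Y : Matrix q m K) :
    Matrix (p ⊕ q) m K :=
  fun i j => Sum.elim (fun a => X a j) (fun a => Y a j) i

/-! The coarse block `(i, j)`, `i > j`, is the `2 × 2` array of fine blocks `(2i + a, 2j + b)`
(0-based). Their chains all contain the middle factor `R_{2i-1} ⋯ R_{2j+2} = R'_{i-1} ⋯ R'_{j+1}`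
and differ only by an extra `R_{2i}` on the left (when `a = 1`) and `R_{2j+1}` on the right
(when `b = 0`); these are absorbed into `P'` and `Q'`. The upper part is the lower part of `Aᵀ`,
whose generator is `(Vᵀ, Wᵀ, Uᵀ)`. -/

open Matrix

lemma vcat_eq_fromRows {K m p q : Type*} (X : Matrix p m K) (Y : Matrix q m K) :
    vcat X Y = fromRows X Y := by
  ext (a | a) b <;> rfl

lemma hcat_eq_fromCols {K m p q : Type*} (X : Matrix m p K) (Y : Matrix m q K) :
    hcat X Y = fromCols X Y := by
  ext a (b | b) <;> rfl

section Chains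

variable {K : Type*} [Field K] {ι : Type*} [Fintype ι] [DecidableEq ι]

lemma chainDesc_succ_of_eq (R : ℕ → Matrix ι ι K) {j m k : ℕ} (h : j + m + 1 = k) :
    chainDesc R j (m + 1) = R k * chainDesc R j m := by
  subst h; rfl

lemma chainDesc_succ' (R : ℕ → Matrix ι ι K) (j m : ℕ) :
    chainDesc R j (m + 1) = chainDesc R (j + 1) m * R (j + 1) := by
  induction m with
  | zero => simp [chainDesc]
  | succ m ih =>
    rw [chainDesc_succ_of_eq R (show j + (m + 1) + 1 = j + 1 + m + 1 by omega), ih, ← mul_assoc]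
    rfl

lemma chainDesc_pair (R : ℕ → Matrix ι ι K) (j m : ℕ) :
    chainDesc (fun k => R (2 * k + 1) * R (2 * k)) j m = chainDesc R (2 * j + 1) (2 * m) := by
  induction m with
  | zero => rfl
  | succ m ih =>
    rw [show 2 * (m + 1) = 2 * m + 1 + 1 by ring,
      chainDesc_succ_of_eq R (show 2 * j + 1 + (2 * m + 1) + 1 = 2 * (j + m + 1) + 1 by ring),
      chainDesc_succ_of_eq R (show 2 * j + 1 + 2 * m + 1 = 2 * (j + m + 1) by ring), ← ih,
      ← mul_assoc]
    rfl

lemma transpose_chainAsc (W : ℕ → Matrix ι ι K) (i m : ℕ) :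
    (chainAsc W i m)ᵀ = chainDesc (fun k => (W k)ᵀ) i m := by
  induction m with
  | zero => exact transpose_one
  | succ m ih => rw [chainAsc, transpose_mul, ih]; rfl

end Chains

section Blocks

variable {K : Type*} [Field K] {n : ℕ}

lemma blk_transpose (t : ℕ) (A : Matrix (Fin n) (Fin n) K) (i j : ℕ) :
    blk t Aᵀ i j = (blk t A j i)ᵀ := by
  ext a b
  simp only [blk, transpose_apply, and_comm]

lemma blk_apply_congr (A : Matrix (Fin n) (Fin n) K) {t t' i i' j j' : ℕ} (a b : Fin t)
    (a' b' : Fin t') (hrow : i * t + a = i' * t' + a') (hcol : j * t + b = j' * t' + b') :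
    blk t A i j a b = blk t' A i' j' a' b' := by
  simp only [blk, hrow, hcol]

lemma blk_add_self (s : ℕ) (A : Matrix (Fin n) (Fin n) K) (i j : ℕ) :
    blk (s + s) A i j =
      reindex finSumFinEquiv finSumFinEquiv
        (fromBlocks (blk s A (2 * i) (2 * j)) (blk s A (2 * i) (2 * j + 1))
          (blk s A (2 * i + 1) (2 * j)) (blk s A (2 * i + 1) (2 * j + 1))) := by
  ext a b
  rw [reindex_apply, submatrix_apply]
  refine Fin.addCases (fun a => ?_) (fun a => ?_) a <;>
  refine Fin.addCases (fun b => ?_) (fun b => ?_) b <;>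
  simp only [finSumFinEquiv_symm_apply_castAdd, finSumFinEquiv_symm_apply_natAdd,
    fromBlocks_apply₁₁, fromBlocks_apply₁₂, fromBlocks_apply₂₁, fromBlocks_apply₂₂] <;>
  exact blk_apply_congr A _ _ _ _ (by simp only [Fin.val_castAdd, Fin.val_natAdd]; ring)
    (by simp only [Fin.val_castAdd, Fin.val_natAdd]; ring)

end Blocks

section Compression

variable {K : Type*} [Field K] {n s M : ℕ} {ι : Type*} [Fintype ι] [DecidableEq ι]

theorem blk_add_self_lower (A : Matrix (Fin n) (Fin n) K) (P : ℕ → Matrix (Fin s) ι K)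
    (Q : ℕ → Matrix ι (Fin s) K) (R : ℕ → Matrix ι ι K)
    (hlow : ∀ i j : ℕ, i < 2 * M → j < i → blk s A i j = P i * chainDesc R j (i - j - 1) * Q j)
    {i j : ℕ} (hi : i < M) (hj : j < i) :
    blk (s + s) A i j =
      reindex finSumFinEquiv finSumFinEquiv
        (vcat (P (2 * i)) (P (2 * i + 1) * R (2 * i)) *
          chainDesc (fun k => R (2 * k + 1) * R (2 * k)) j (i - j - 1) *
          hcat (R (2 * j + 1) * Q (2 * j)) (Q (2 * j + 1))) := by
  obtain ⟨d, hd⟩ : ∃ d, i = j + d + 1 := ⟨i - j - 1, by omega⟩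
  have hlow' : ∀ i' j' m, i' < 2 * M → j' + m + 1 = i' →
      blk s A i' j' = P i' * chainDesc R j' m * Q j' := by
    rintro i' j' m hi' rfl
    rw [hlow _ _ hi' (by omega), show j' + m + 1 - j' - 1 = m by omega]
  have h00 : blk s A (2 * i) (2 * j) =
      P (2 * i) * chainDesc R (2 * j + 1) (2 * d) * (R (2 * j + 1) * Q (2 * j)) := by
    rw [hlow' _ _ (2 * d + 1) (by omega) (by omega), chainDesc_succ']
    simp only [Matrix.mul_assoc]
  have h01 : blk s A (2 * i) (2 * j + 1) =
      P (2 * i) * chainDesc R (2 * j + 1) (2 * d) * Q (2 * j + 1) :=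
    hlow' _ _ (2 * d) (by omega) (by omega)
  have h10 : blk s A (2 * i + 1) (2 * j) =
      P (2 * i + 1) * R (2 * i) * chainDesc R (2 * j + 1) (2 * d) *
        (R (2 * j + 1) * Q (2 * j)) := by
    rw [hlow' _ _ (2 * d + 1 + 1) (by omega) (by omega),
      chainDesc_succ_of_eq R (show 2 * j + (2 * d + 1) + 1 = 2 * i by omega), chainDesc_succ']
    simp only [Matrix.mul_assoc]
  have h11 : blk s A (2 * i + 1) (2 * j + 1) =
      P (2 * i + 1) * R (2 * i) * chainDesc R (2 * j + 1) (2 * d) * Q (2 * j + 1) := by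
    rw [hlow' _ _ (2 * d + 1) (by omega) (by omega),
      chainDesc_succ_of_eq R (show 2 * j + 1 + 2 * d + 1 = 2 * i by omega)]
    simp only [Matrix.mul_assoc]
  rw [blk_add_self, h00, h01, h10, h11, vcat_eq_fromRows, hcat_eq_fromCols, fromRows_mul,
    fromRows_mul_fromCols, show i - j - 1 = d by omega, chainDesc_pair]

theorem blk_add_self_upper (A : Matrix (Fin n) (Fin n) K) (U : ℕ → Matrix (Fin s) ι K)
    (V : ℕ → Matrix ι (Fin s) K) (W : ℕ → Matrix ι ι K)
    (hup : ∀ i j : ℕ, j < 2 * M → i < j → blk s A i j = U i * chainAsc W i (j - i - 1) * V j)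
    {i j : ℕ} (hj : j < M) (hij : i < j) :
    blk (s + s) A i j =
      reindex finSumFinEquiv finSumFinEquiv
        (vcat (U (2 * i) * W (2 * i + 1)) (U (2 * i + 1)) *
          chainAsc (fun k => W (2 * k) * W (2 * k + 1)) i (j - i - 1) *
          hcat (V (2 * j)) (W (2 * j) * V (2 * j + 1))) := by
  have hlowT : ∀ j i : ℕ, j < 2 * M → i < j →
      blk s Aᵀ j i = (V j)ᵀ * chainDesc (fun k => (W k)ᵀ) i (j - i - 1) * (U i)ᵀ := by
    intro j i hj hij
    rw [blk_transpose, hup i j hj hij, ← transpose_chainAsc, transpose_mul, transpose_mul,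
      ← Matrix.mul_assoc]
  rw [← transpose_transpose (blk (s + s) A i j), ← blk_transpose,
    blk_add_self_lower Aᵀ _ _ _ hlowT hj hij,
    show (fun k => (W (2 * k + 1))ᵀ * (W (2 * k))ᵀ) = fun k => (W (2 * k) * W (2 * k + 1))ᵀ from
      funext fun k => (transpose_mul _ _).symm, ← transpose_chainAsc]
  simp only [transpose_reindex, transpose_mul, vcat_eq_fromRows, hcat_eq_fromCols,
    transpose_fromRows, transpose_fromCols, transpose_transpose, Matrix.mul_assoc]

theorem blk_add_self_diag (A : Matrix (Fin n) (Fin n) K) (P U : ℕ → Matrix (Fin s) ι K)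
    (Q V : ℕ → Matrix ι (Fin s) K) (R W : ℕ → Matrix ι ι K) (D : ℕ → Matrix (Fin s) (Fin s) K)
    (hlow : ∀ i j : ℕ, i < 2 * M → j < i → blk s A i j = P i * chainDesc R j (i - j - 1) * Q j)
    (hdiag : ∀ i : ℕ, i < 2 * M → blk s A i i = D i)
    (hup : ∀ i j : ℕ, j < 2 * M → i < j → blk s A i j = U i * chainAsc W i (j - i - 1) * V j)
    {i : ℕ} (hi : i < M) :
    blk (s + s) A i i =
      reindex finSumFinEquiv finSumFinEquiv
        (fromBlocks (D (2 * i)) (U (2 * i) * V (2 * i + 1))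
          (P (2 * i + 1) * Q (2 * i)) (D (2 * i + 1))) := by
  rw [blk_add_self, hdiag _ (by omega), hdiag _ (by omega),
    hlow (2 * i + 1) (2 * i) (by omega) (by omega), hup (2 * i) (2 * i + 1) (by omega) (by omega),
    show 2 * i + 1 - 2 * i - 1 = 0 by omega]
  simp only [chainDesc, chainAsc, Matrix.mul_one]

end Compression

/-- Indices are 0-based: `2i, 2i+1` are the paper's `2i-1, 2i`. -/
theorem sss_compression {K : Type*} [Field K] (M s : ℕ)
    (A : Matrix (Fin (2 * M * s)) (Fin (2 * M * s)) K)
    (P U : ℕ → Matrix (Fin s) (Fin s ⊕ Fin s) K)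
    (Q V : ℕ → Matrix (Fin s ⊕ Fin s) (Fin s) K)
    (R W : ℕ → Matrix (Fin s ⊕ Fin s) (Fin s ⊕ Fin s) K)
    (D : ℕ → Matrix (Fin s) (Fin s) K)
    (hlow : ∀ i j : ℕ, i < 2 * M → j < i →
      blk s A i j = P i * chainDesc R j (i - j - 1) * Q j)
    (hdiag : ∀ i : ℕ, i < 2 * M → blk s A i i = D i)
    (hup : ∀ i j : ℕ, j < 2 * M → i < j →
      blk s A i j = U i * chainAsc W i (j - i - 1) * V j) :
    (∀ i j : ℕ, i < M → j < i →
      blk (s + s) A i j =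
        Matrix.reindex finSumFinEquiv finSumFinEquiv
          (vcat (P (2 * i)) (P (2 * i + 1) * R (2 * i)) *
            chainDesc (fun k => R (2 * k + 1) * R (2 * k)) j (i - j - 1) *
            hcat (R (2 * j + 1) * Q (2 * j)) (Q (2 * j + 1)))) ∧
    (∀ i : ℕ, i < M →
      blk (s + s) A i i =
        Matrix.reindex finSumFinEquiv finSumFinEquiv
          (Matrix.fromBlocks (D (2 * i)) (U (2 * i) * V (2 * i + 1))
            (P (2 * i + 1) * Q (2 * i)) (D (2 * i + 1)))) ∧
    (∀ i j : ℕ, j < M → i < j →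
      blk (s + s) A i j =
        Matrix.reindex finSumFinEquiv finSumFinEquiv
          (vcat (U (2 * i) * W (2 * i + 1)) (U (2 * i + 1)) *
            chainAsc (fun k => W (2 * k) * W (2 * k + 1)) i (j - i - 1) *
            hcat (V (2 * j)) (W (2 * j) * V (2 * j + 1)))) := by
  exact ⟨fun i j hi hij => blk_add_self_lower A P Q R hlow hi hij,
    fun i hi => blk_add_self_diag A P U Q V R W D hlow hdiag hup hi,
    fun i j hj hij => blk_add_self_upper A U V W hup hj hij⟩
end

section
/- Any n×n matrix A over a field K of rank r admits a decomposition A = C·R·E where C ∈ K^{n×r} is in column echelon form, E ∈ K^{r×n} is in row echelon form, and R ∈ K^{r×r} is a permutation matrix. -/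
/-- `C ∈ K^{n×r}` is in column echelon form: each column is nonzero and the row indices of
the leading (first) nonzero entries of the columns are strictly increasing. -/
def IsColEchelon {K : Type*} [Field K] {n r : ℕ} (C : Matrix (Fin n) (Fin r) K) : Prop :=
  ∃ f : Fin r → Fin n, StrictMono f ∧ (∀ j, C (f j) j ≠ 0) ∧
    ∀ j, ∀ i : Fin n, (i : ℕ) < (f j : ℕ) → C i j = 0

/-- `E ∈ K^{r×n}` is in row echelon form: each row is nonzero and the column indices of the
leading nonzero entries of the rows are strictly increasing. -/
def IsRowEchelon {K : Type*} [Field K] {n r : ℕ} (E : Matrix (Fin r) (Fin n) K) : Prop :=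
  ∃ g : Fin r → Fin n, StrictMono g ∧ (∀ i, E i (g i) ≠ 0) ∧
    ∀ i, ∀ j : Fin n, (j : ℕ) < (g i : ℕ) → E i j = 0

/-- A permutation matrix: a square 0-1 matrix with exactly one 1 in each row and column. -/
def IsPermMatrix {K : Type*} [Field K] {r : ℕ} (R : Matrix (Fin r) (Fin r) K) : Prop :=
  ∃ σ : Equiv.Perm (Fin r), ∀ i j, R i j = if σ i = j then 1 else 0

/-!
Gaussian elimination that always pivots on the topmost nonzero entry of the next column needs
no row exchanges: it only adds multiples of the pivot row to lower rows and multiples of the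
pivot column to later columns. Clearing the pivot's column and row this way gives
`A = L * D * U` with `L` unit lower triangular, `U` unit upper triangular and at most one
nonzero entry in each row and column of `D`, so that `D = diagonal w * τ.permMatrix`.

If `f 0 < ⋯ < f (r-1)` are the indices with `w ≠ 0` and `g 0 < ⋯ < g (r-1)` their images
under `τ`, the columns `w (f k) • L[:, f k]` form a column echelon `C`, the rows `U[g k, :]` a
row echelon `E`, and `R` is the permutation matrix matching `τ ∘ f` with `g`. As `L` and `U`
are invertible, `r = rank D = rank A`.
-/

namespace Matrix

section

variable {m n R : Type*}

theorem BlockTriangular.diag_mul [Fintype m] [NonUnitalNonAssocSemiring R] {α : Type*}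
    [LinearOrder α] {b : m → α} (hb : Function.Injective b) {M N : Matrix m m R}
    (hM : M.BlockTriangular b) (hN : N.BlockTriangular b) : (M * N).diag = M.diag * N.diag := by
  ext i
  rw [diag_apply, mul_apply, Finset.sum_eq_single i]
  · rfl
  · intro t _ hti
    rcases (hb.ne hti).lt_or_gt with h | h
    · rw [hM h, zero_mul]
    · rw [hN h, mul_zero]
  · simp

section UnitTriangular

variable [LinearOrder m]

def IsUnitLowerTriangular [Zero R] [One R] (L : Matrix m m R) : Prop :=
  L.IsLowerTriangular ∧ ∀ i, L i i = 1

def IsUnitUpperTriangular [Zero R] [One R] (U : Matrix m m R) : Prop :=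
  U.IsUpperTriangular ∧ ∀ i, U i i = 1

section Semiring

variable [Semiring R]

section

variable [DecidableEq m]

theorem isUnitLowerTriangular_one : (1 : Matrix m m R).IsUnitLowerTriangular :=
  ⟨blockTriangular_one, fun _ => one_apply_eq _⟩

theorem isUnitUpperTriangular_one : (1 : Matrix m m R).IsUnitUpperTriangular :=
  ⟨blockTriangular_one, fun _ => one_apply_eq _⟩

theorem isUnitLowerTriangular_one_add_vecMulVec_single {u : m → R} {p : m}
    (hu : ∀ i ≤ p, u i = 0) : (1 + vecMulVec u (Pi.single p 1)).IsUnitLowerTriangular := by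
  refine ⟨fun i j hij => ?_, fun i => ?_⟩
  · have hij : i < j := hij
    rcases eq_or_ne j p with rfl | hjp
    · simp [vecMulVec_apply, hij.ne, hu i hij.le]
    · simp [vecMulVec_apply, hij.ne, hjp]
  · rcases eq_or_ne i p with rfl | hip
    · simp [vecMulVec_apply, hu i le_rfl]
    · simp [vecMulVec_apply, hip]

theorem isUnitUpperTriangular_one_add_vecMulVec_single {v : m → R} {k : m}
    (hv : ∀ j ≤ k, v j = 0) : (1 + vecMulVec (Pi.single k 1) v).IsUnitUpperTriangular := by
  refine ⟨fun i j hij => ?_, fun j => ?_⟩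
  · have hij : j < i := hij
    rcases eq_or_ne i k with rfl | hik
    · simp [vecMulVec_apply, hij.ne', hv j hij.le]
    · simp [vecMulVec_apply, hij.ne', hik]
  · rcases eq_or_ne j k with rfl | hjk
    · simp [vecMulVec_apply, hv j le_rfl]
    · simp [vecMulVec_apply, hjk]

end

variable [Fintype m]

theorem IsUnitLowerTriangular.mul {L₁ L₂ : Matrix m m R} (h₁ : L₁.IsUnitLowerTriangular)
    (h₂ : L₂.IsUnitLowerTriangular) : (L₁ * L₂).IsUnitLowerTriangular :=
  ⟨h₁.1.mul h₂.1, fun i => by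
    simpa [h₁.2, h₂.2] using
      congrFun (BlockTriangular.diag_mul OrderDual.toDual.injective h₁.1 h₂.1) i⟩

theorem IsUnitUpperTriangular.mul {U₁ U₂ : Matrix m m R} (h₁ : U₁.IsUnitUpperTriangular)
    (h₂ : U₂.IsUnitUpperTriangular) : (U₁ * U₂).IsUnitUpperTriangular :=
  ⟨h₁.1.mul h₂.1, fun i => by
    simpa [h₁.2, h₂.2] using congrFun (BlockTriangular.diag_mul Function.injective_id h₁.1 h₂.1) i⟩

end Semiring

variable [Fintype m] [DecidableEq m] [CommRing R]

theorem IsUnitLowerTriangular.det_eq_one {L : Matrix m m R} (hL : L.IsUnitLowerTriangular) :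
    L.det = 1 := by
  simp [det_of_isLowerTriangular L hL.1, hL.2]

theorem IsUnitUpperTriangular.det_eq_one {U : Matrix m m R} (hU : U.IsUnitUpperTriangular) :
    U.det = 1 := by
  simp [det_of_isUpperTriangular hU.1, hU.2]

theorem IsUnitLowerTriangular.rank_mul_mul [Fintype n] [DecidableEq n] [LinearOrder n]
    {L : Matrix m m R} {U : Matrix n n R} (hL : L.IsUnitLowerTriangular)
    (hU : U.IsUnitUpperTriangular) (D : Matrix m n R) : (L * D * U).rank = D.rank := by
  rw [rank_mul_eq_left_of_isUnit_det U _ (by simp [hU.det_eq_one]),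
    rank_mul_eq_right_of_isUnit_det L D (by simp [hL.det_eq_one])]

end UnitTriangular

theorem rank_mul_permMatrix [Fintype n] [DecidableEq n] [CommRing R] (M : Matrix m n R)
    (τ : Equiv.Perm n) : (M * τ.permMatrix R).rank = M.rank := by
  rw [Equiv.Perm.permMatrix, PEquiv.mul_toMatrix_toPEquiv]
  exact rank_submatrix M (Equiv.refl m) τ.symm

theorem one_add_vecMulVec_single_mul_sub [Fintype m] [DecidableEq m] [Ring R]
    (A : Matrix m n R) {u : m → R} {p : m} (hu : u p = 0) :
    (1 + vecMulVec u (Pi.single p 1)) * (A - vecMulVec u (A.row p)) = A := by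
  rw [Matrix.add_mul, Matrix.one_mul, Matrix.mul_sub, vecMulVec_mul, single_one_vecMul,
    vecMulVec_mul_vecMulVec, single_one_dotProduct, hu, zero_smul]
  ext
  simp [vecMulVec_apply]

theorem sub_mul_one_add_vecMulVec_single [Fintype n] [DecidableEq n] [Ring R]
    (A : Matrix m n R) {v : n → R} {k : n} (hv : v k = 0) :
    (A - vecMulVec (A.col k) v) * (1 + vecMulVec (Pi.single k 1) v) = A := by
  rw [Matrix.mul_add, Matrix.mul_one, Matrix.sub_mul, mul_vecMulVec, mulVec_single_one,
    vecMulVec_mul_vecMulVec, dotProduct_single_one, hv, zero_smul]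
  ext
  simp [vecMulVec_apply]

def IsIsolatedEntry [Zero R] (D : Matrix m n R) (i : m) (j : n) : Prop :=
  (∀ i', D i' j ≠ 0 → i' = i) ∧ ∀ j', D i j' ≠ 0 → j' = j

theorem exists_eq_diagonal_mul_permMatrix [Fintype m] [DecidableEq m] [Semiring R]
    (D : Matrix m m R) (hD : ∀ i j, D i j ≠ 0 → D.IsIsolatedEntry i j) :
    ∃ (τ : Equiv.Perm m) (w : m → R), D = diagonal w * τ.permMatrix R := by
  choose col hcol using fun i : {i // ∃ j, D i j ≠ 0} => i.2
  have hcol_inj : Function.Injective col := fun i i' h =>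
    Subtype.ext ((hD i' _ (hcol i')).1 i (h ▸ hcol i))
  obtain ⟨τ, hτ⟩ := Equiv.Perm.exists_extending_pair Subtype.val col Subtype.val_injective hcol_inj
  refine ⟨τ, fun i => D i (τ i), ?_⟩
  ext i j
  rw [diagonal_mul, Equiv.Perm.permMatrix, PEquiv.toMatrix_toPEquiv_apply, Pi.single_apply]
  split_ifs with h
  · rw [h, mul_one]
  · rw [mul_zero]
    by_contra hij
    exact h (((hD i _ (hcol ⟨i, j, hij⟩)).2 j hij).trans (hτ ⟨i, j, hij⟩).symm)

theorem exists_clear_pivot {K : Type*} [Field K] [Fintype m] [DecidableEq m] [LinearOrder m]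
    [Fintype n] [DecidableEq n] [LinearOrder n]
    (A : Matrix m n K) {p : m} {k : n} (hp : A p k ≠ 0) (habove : ∀ i < p, A i k = 0)
    (hleft : ∀ j < k, A p j = 0) :
    ∃ (L : Matrix m m K) (B : Matrix m n K) (U : Matrix n n K), L.IsUnitLowerTriangular ∧
      U.IsUnitUpperTriangular ∧ A = L * B * U ∧ B.IsIsolatedEntry p k ∧
      (∀ i j, A i k = 0 → B i j = A i j) ∧ ∀ i j, A p j = 0 → B i j = A i j := by
  set u : m → K := fun i => if p < i then A i k / A p k else 0
  set v : n → K := fun j => if k < j then A p j / A p k else 0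
  set B := A - vecMulVec u (A.row p)
  have hup : u p = 0 := by simp [u]
  have hvk : v k = 0 := by simp [v]
  have hB : ∀ i j, (B - vecMulVec (B.col k) v) i j =
      A i j - u i * A p j - (A i k - u i * A p k) * v j := by
    simp [B, vecMulVec_apply]
  refine ⟨1 + vecMulVec u (Pi.single p 1), B - vecMulVec (B.col k) v,
    1 + vecMulVec (Pi.single k 1) v,
    isUnitLowerTriangular_one_add_vecMulVec_single fun i hi => by simp [u, hi.not_gt],
    isUnitUpperTriangular_one_add_vecMulVec_single fun j hj => by simp [v, hj.not_gt], ?_,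
    ⟨fun i hi => ?_, fun j hj => ?_⟩, fun i j hi => by simp [hB, u, hi],
    fun i j hj => by simp [hB, v, hj]⟩
  · rw [Matrix.mul_assoc, sub_mul_one_add_vecMulVec_single B hvk,
      one_add_vecMulVec_single_mul_sub A hup]
  · rw [hB, hvk, mul_zero, sub_zero] at hi
    by_contra hne
    rcases lt_or_gt_of_ne hne with h | h
    · simp [u, h.not_gt, habove i h] at hi
    · simp [u, h, div_mul_cancel₀ _ hp] at hi
  · rw [hB, hup] at hj
    by_contra hne
    rcases lt_or_gt_of_ne hne with h | h
    · simp [v, h.not_gt, hleft j h] at hj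
    · simp [v, h, mul_div_cancel₀ _ hp] at hj

end

section Elimination

variable {K : Type*} [Field K] {m n : ℕ}

theorem exists_ldu_isolated_step (A : Matrix (Fin m) (Fin n) K) (k : Fin n)
    (hA : ∀ i j, j < k → A i j ≠ 0 → A.IsIsolatedEntry i j) :
    ∃ (L : Matrix (Fin m) (Fin m) K) (B : Matrix (Fin m) (Fin n) K) (U : Matrix (Fin n) (Fin n) K),
      L.IsUnitLowerTriangular ∧ U.IsUnitUpperTriangular ∧ A = L * B * U ∧
      ∀ i j, j ≤ k → B i j ≠ 0 → B.IsIsolatedEntry i j := by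
  by_cases hzero : ∀ i, A i k = 0
  · refine ⟨1, A, 1, isUnitLowerTriangular_one, isUnitUpperTriangular_one, by simp,
      fun i j hj hij => ?_⟩
    rcases hj.lt_or_eq with hj | rfl
    · exact hA i j hj hij
    · exact absurd (hzero i) hij
  push Not at hzero
  obtain ⟨p, hp, habove⟩ : ∃ p, A p k ≠ 0 ∧ ∀ i < p, A i k = 0 := by
    obtain ⟨p, hp, hmin⟩ := WellFounded.has_min wellFounded_lt {i | A i k ≠ 0} hzero
    exact ⟨p, hp, fun i hi => by_contra fun h => hmin i h hi⟩
  have hleft : ∀ j < k, A p j = 0 := fun j hj =>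
    by_contra fun h => hj.ne ((hA p j hj h).2 k hp).symm
  obtain ⟨L, B, U, hL, hU, hAB, hpk, hrow, hcol⟩ := exists_clear_pivot A hp habove hleft
  refine ⟨L, B, U, hL, hU, hAB, fun i j hj hij => ?_⟩
  rcases hj.lt_or_eq with hj | rfl
  · have hBA : ∀ i', B i' j = A i' j := fun i' => hcol i' j (hleft j hj)
    have hiso := hA i j hj (hBA i ▸ hij)
    have hik : A i k = 0 := by_contra fun h => hj.ne' (hiso.2 k h)
    exact ⟨fun i' hi' => hiso.1 i' (hBA i' ▸ hi'), fun j' hj' => hiso.2 j' (hrow i j' hik ▸ hj')⟩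
  · obtain rfl := hpk.1 i hij
    exact hpk

theorem exists_ldu_isolated_of_le (A : Matrix (Fin m) (Fin n) K) {k : ℕ} (hk : k ≤ n) :
    ∃ (L : Matrix (Fin m) (Fin m) K) (D : Matrix (Fin m) (Fin n) K) (U : Matrix (Fin n) (Fin n) K),
      L.IsUnitLowerTriangular ∧ U.IsUnitUpperTriangular ∧ A = L * D * U ∧
      ∀ i (j : Fin n), (j : ℕ) < k → D i j ≠ 0 → D.IsIsolatedEntry i j := by
  induction k with
  | zero =>
    exact ⟨1, A, 1, isUnitLowerTriangular_one, isUnitUpperTriangular_one, by simp,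
      fun _ _ h => absurd h (Nat.not_lt_zero _)⟩
  | succ k ih =>
    obtain ⟨L, D, U, hL, hU, hA, hD⟩ := ih (by omega)
    obtain ⟨L', B, U', hL', hU', hDB, hB⟩ := exists_ldu_isolated_step D ⟨k, hk⟩ hD
    refine ⟨L * L', B, U' * U, hL.mul hL', hU'.mul hU, ?_,
      fun i j hj => hB i j (Fin.le_def.2 (Nat.lt_succ_iff.1 hj))⟩
    rw [hA, hDB]
    simp only [Matrix.mul_assoc]

theorem exists_bruhat_decomposition (A : Matrix (Fin m) (Fin n) K) :
    ∃ (L : Matrix (Fin m) (Fin m) K) (D : Matrix (Fin m) (Fin n) K) (U : Matrix (Fin n) (Fin n) K),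
      L.IsUnitLowerTriangular ∧ U.IsUnitUpperTriangular ∧ A = L * D * U ∧
      ∀ i j, D i j ≠ 0 → D.IsIsolatedEntry i j := by
  obtain ⟨L, D, U, hL, hU, hA, hD⟩ := exists_ldu_isolated_of_le A le_rfl
  exact ⟨L, D, U, hL, hU, hA, fun i j => hD i j j.isLt⟩

end Elimination

end Matrix

theorem isColEchelon_submatrix_mul_diagonal {K : Type*} [Field K] {n r : ℕ}
    {L : Matrix (Fin n) (Fin n) K} (hL : L.IsUnitLowerTriangular) {f : Fin r → Fin n}
    (hf : StrictMono f) {d : Fin r → K} (hd : ∀ k, d k ≠ 0) :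
    IsColEchelon (L.submatrix id f * Matrix.diagonal d) :=
  ⟨f, hf, fun k => by simp [hL.2, hd],
    fun k i hi => by simp [hL.1 (show OrderDual.toDual (f k) < OrderDual.toDual i from hi)]⟩

theorem isRowEchelon_submatrix {K : Type*} [Field K] {n r : ℕ}
    {U : Matrix (Fin n) (Fin n) K} (hU : U.IsUnitUpperTriangular) {g : Fin r → Fin n}
    (hg : StrictMono g) : IsRowEchelon (U.submatrix g id) :=
  ⟨g, hg, fun k => by simp [hU.2], fun _ _ hj => hU.1 hj⟩

theorem isPermMatrix_permMatrix {K : Type*} [Field K] {r : ℕ} (σ : Equiv.Perm (Fin r)) :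
    IsPermMatrix (σ.permMatrix K) :=
  ⟨σ, fun i j => by simp [eq_comm]⟩

theorem exists_cre_decomposition_mul_diagonal_mul_permMatrix_mul {K : Type*} [Field K] {n r : ℕ}
    {L U : Matrix (Fin n) (Fin n) K} (hL : L.IsUnitLowerTriangular)
    (hU : U.IsUnitUpperTriangular) (τ : Equiv.Perm (Fin n)) (w : Fin n → K)
    (hr : (Matrix.diagonal w).rank = r) :
    ∃ (C : Matrix (Fin n) (Fin r) K) (R : Matrix (Fin r) (Fin r) K)
      (E : Matrix (Fin r) (Fin n) K), IsColEchelon C ∧ IsPermMatrix R ∧ IsRowEchelon E ∧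
      L * (Matrix.diagonal w * τ.permMatrix K) * U = C * R * E := by
  classical
  set s : Finset (Fin n) := {i | w i ≠ 0}
  have hs : s.card = r := by rw [← hr, Matrix.rank_diagonal, Fintype.card_subtype]
  have ht : (s.map τ.toEmbedding).card = r := by rw [Finset.card_map, hs]
  let σ : Equiv.Perm (Fin r) := (s.orderIsoOfFin hs).toEquiv.trans
    ((τ.subtypeEquiv fun i => by simp).trans
      ((s.map τ.toEmbedding).orderIsoOfFin ht).toEquiv.symm)
  set f := s.orderEmbOfFin hs
  set g := (s.map τ.toEmbedding).orderEmbOfFin ht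
  have hgσ : ∀ k, g (σ k) = τ (f k) := by
    intro k
    rw [← Finset.coe_orderIsoOfFin_apply, ← Finset.coe_orderIsoOfFin_apply]
    simp [σ]
  have hwf : ∀ k, w (f k) ≠ 0 := fun k => (Finset.mem_filter.1 (s.orderEmbOfFin_mem hs k)).2
  refine ⟨L.submatrix id f * Matrix.diagonal (fun k => w (f k)), σ.permMatrix K, U.submatrix g id,
    isColEchelon_submatrix_mul_diagonal hL f.strictMono hwf, isPermMatrix_permMatrix σ,
    isRowEchelon_submatrix hU g.strictMono, ?_⟩
  ext i j
  rw [Matrix.mul_assoc, Matrix.mul_assoc, Matrix.mul_assoc, Equiv.Perm.permMatrix,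
    PEquiv.toMatrix_toPEquiv_mul, PEquiv.toMatrix_toPEquiv_mul, Matrix.mul_apply, Matrix.mul_apply]
  simp only [Matrix.diagonal_mul, Matrix.mul_diagonal, Matrix.submatrix_apply, id_eq, hgσ]
  refine (Fintype.sum_of_injective f f.injective _ _ (fun a ha => ?_) fun k => mul_assoc _ _ _).symm
  have hwa : w a = 0 := by simpa [f, s] using ha
  rw [hwa, zero_mul, mul_zero]

/-- Any `n×n` matrix `A` over a field `K` of rank `r` admits a CRE decomposition
`A = C·R·E` with `C` in column echelon form, `R` a permutation matrix and `E` in row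
echelon form. -/
theorem exists_cre_decomposition {K : Type*} [Field K] {n : ℕ}
    (A : Matrix (Fin n) (Fin n) K) (r : ℕ) (hr : A.rank = r) :
    ∃ (C : Matrix (Fin n) (Fin r) K) (R : Matrix (Fin r) (Fin r) K)
      (E : Matrix (Fin r) (Fin n) K),
      IsColEchelon C ∧ IsPermMatrix R ∧ IsRowEchelon E ∧ A = C * R * E := by
  obtain ⟨L, D, U, hL, hU, rfl, hD⟩ := Matrix.exists_bruhat_decomposition A
  obtain ⟨τ, w, rfl⟩ := Matrix.exists_eq_diagonal_mul_permMatrix D hD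
  refine exists_cre_decomposition_mul_diagonal_mul_permMatrix_mul hL hU τ w ?_
  rw [← hr, hL.rank_mul_mul hU, Matrix.rank_mul_permMatrix]
end

section
/- Let A ∈ K^{m×r_A}·K^{r_A×m} and B be given in factored form A = C_A R_A E_A, B = C_B R_B E_B, and let G, H ∈ K^{m×t}. Suppose [R_A E_A; R_B E_B; -Hᵀ] = C_R R_R E_R and [C_A C_B G] = C_L R_L E_L are full decompositions (i.e., the products equal the respective matrices), and let X = R_L E_L C_R R_R with X = C_X R_X E_X. Then (C_L C_X)·R_X·(E_X E_R) = A + B - G·Hᵀ. -/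
open Matrix


lemma hcat_mul_vcat {K : Type*} [CommRing K] {m n p q : Type*} [Fintype p] [Fintype q]
    (X : Matrix m p K) (Y : Matrix m q K) (P : Matrix p n K) (Q : Matrix q n K) :
    hcat X Y * vcat P Q = X * P + Y * Q := by
  ext i j
  simp [hcat, vcat, Matrix.mul_apply, Fintype.sum_sum_type]

/-- Given factorizations `A = C_A R_A E_A`, `B = C_B R_B E_B`, `G, H ∈ K^{m×t}`, and exact
decompositions `[R_A E_A; R_B E_B; -Hᵀ] = C_R R_R E_R`, `[C_A C_B G] = C_L R_L E_L`, and
`X = R_L E_L C_R R_R = C_X R_X E_X`, the composed factorization satisfies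
`(C_L C_X)·R_X·(E_X E_R) = A + B - G Hᵀ`. -/
theorem bruhat_sum_cre {F : Type*} [Field F] (m t rA rB p q u : ℕ)
    (A B : Matrix (Fin m) (Fin m) F)
    (CA : Matrix (Fin m) (Fin rA) F) (RA : Matrix (Fin rA) (Fin rA) F)
    (EA : Matrix (Fin rA) (Fin m) F)
    (CB : Matrix (Fin m) (Fin rB) F) (RB : Matrix (Fin rB) (Fin rB) F)
    (EB : Matrix (Fin rB) (Fin m) F)
    (G H : Matrix (Fin m) (Fin t) F)
    (hA : A = CA * RA * EA) (hB : B = CB * RB * EB)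
    (CR : Matrix ((Fin rA ⊕ Fin rB) ⊕ Fin t) (Fin p) F)
    (RR : Matrix (Fin p) (Fin p) F) (ER : Matrix (Fin p) (Fin m) F)
    (CL : Matrix (Fin m) (Fin q) F) (RL : Matrix (Fin q) (Fin q) F)
    (EL : Matrix (Fin q) ((Fin rA ⊕ Fin rB) ⊕ Fin t) F)
    (CX : Matrix (Fin q) (Fin u) F) (RX : Matrix (Fin u) (Fin u) F)
    (EX : Matrix (Fin u) (Fin p) F)
    (hR : vcat (vcat (RA * EA) (RB * EB)) (-Hᵀ) = CR * RR * ER)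
    (hL : hcat (hcat CA CB) G = CL * RL * EL)
    (hX : RL * EL * CR * RR = CX * RX * EX) :
    (CL * CX) * RX * (EX * ER) = A + B - G * Hᵀ := by
  have key : CL * RL * EL * (CR * RR * ER) = (CL * CX) * RX * (EX * ER) := by
    calc CL * RL * EL * (CR * RR * ER) = CL * (RL * EL * CR * RR) * ER := by simp only [Matrix.mul_assoc]
    _ = CL * (CX * RX * EX) * ER := by rw [hX]
    _ = (CL * CX) * RX * (EX * ER) := by simp only [Matrix.mul_assoc]
  rw [← key, ← hL, ← hR, hcat_mul_vcat, hcat_mul_vcat, hA, hB]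
  simp only [Matrix.mul_assoc, Matrix.mul_neg, sub_eq_add_neg]
end

section
/- Let M = [[M₁₁, M₁₂], [M₂₁, M₂₂]] be a 2×2 block matrix over a field K where M₁₁ ∈ K^{r×r} is invertible, and suppose M has rank r. If M₁₁ = L·R·U with L lower triangular invertible, U upper triangular invertible, and R a permutation matrix, then M₂₂ = (M₂₁ U⁻¹)·R⁻¹·(L⁻¹ M₁₂), and hence M = C·R·E with C = [L; M₂₁U⁻¹Rᵀ] and E = [U, RᵀL⁻¹M₁₂], where Rᵀ = R⁻¹. -/
open Matrix

lemma vcat_mul {F : Type*} [CommRing F] {r s : ℕ} {p q : Type*}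
    (X : Matrix p (Fin r) F) (Y : Matrix q (Fin r) F) (Z : Matrix (Fin r) (Fin s) F) :
    vcat X Y * Z = vcat (X * Z) (Y * Z) := by
  ext i j
  cases i <;> simp [vcat, Matrix.mul_apply]

lemma vcat_mul_hcat {F : Type*} [CommRing F] {r : ℕ} {p q s t : Type*}
    (X : Matrix p (Fin r) F) (Y : Matrix q (Fin r) F)
    (P : Matrix (Fin r) s F) (Q : Matrix (Fin r) t F) :
    vcat X Y * hcat P Q = Matrix.fromBlocks (X * P) (X * Q) (Y * P) (Y * Q) := by
  ext i j
  cases i <;> cases j <;> simp [vcat, hcat, Matrix.fromBlocks, Matrix.mul_apply]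

lemma schur_of_rank {F : Type*} [Field F] {r m n : ℕ}
    (A : Matrix (Fin r) (Fin r) F) (B : Matrix (Fin r) (Fin n) F)
    (C : Matrix (Fin m) (Fin r) F) (D : Matrix (Fin m) (Fin n) F)
    (hA : IsUnit A) (hrank : (Matrix.fromBlocks A B C D).rank = r) :
    D = C * A⁻¹ * B := by
  have hdet : IsUnit A.det := (Matrix.isUnit_iff_isUnit_det A).mp hA
  haveI : Invertible A := A.invertibleOfIsUnitDet hdet
  set S : Matrix (Fin m) (Fin n) F := D - C * ⅟A * B with hS
  have hfac := Matrix.fromBlocks_eq_of_invertible₁₁ A B C D (l := Fin m) (n := Fin n)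
  have hd1 : IsUnit (Matrix.fromBlocks (1 : Matrix (Fin r) (Fin r) F) 0 (C * ⅟A) 1).det := by
    rw [Matrix.det_fromBlocks_zero₁₂]; simp
  have hd2 : IsUnit (Matrix.fromBlocks (1 : Matrix (Fin r) (Fin r) F) (⅟A * B) 0 1).det := by
    rw [Matrix.det_fromBlocks_zero₂₁]; simp
  have hrank2 : (Matrix.fromBlocks A 0 0 S).rank = r := by
    rw [hfac, Matrix.rank_mul_eq_left_of_isUnit_det _ _ hd2,
      Matrix.rank_mul_eq_right_of_isUnit_det _ _ hd1] at hrank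
    exact hrank
  have hS0 : S = 0 := by
    by_contra h
    obtain ⟨i, j, hij⟩ : ∃ i j, S i j ≠ 0 := by
      by_contra h'
      push_neg at h'
      exact h (by ext i j; simpa using h' i j)
    set N := Matrix.fromBlocks A 0 0 S with hN
    set K := LinearMap.ker (LinearMap.funLeft F F (Sum.inr : Fin m → Fin r ⊕ Fin m)) with hK
    have h1 : K ≤ LinearMap.range N.mulVecLin := by
      intro w hw
      refine ⟨Sum.elim ((⅟A).mulVec (w ∘ Sum.inl)) 0, ?_⟩
      rw [Matrix.mulVecLin_apply, hN, Matrix.fromBlocks_mulVec]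
      have hw' : ∀ a, w (Sum.inr a) = 0 := fun a => congrFun hw a
      funext k
      cases k with
      | inl a => simp [Matrix.mulVec_mulVec]
      | inr a => simp [hw' a]
    have hvmem : N.mulVec (Sum.elim 0 (Pi.single j 1)) ∈ LinearMap.range N.mulVecLin :=
      ⟨_, rfl⟩
    have hvK : N.mulVec (Sum.elim 0 (Pi.single j 1)) ∉ K := by
      intro hmem
      have : N.mulVec (Sum.elim 0 (Pi.single j 1)) (Sum.inr i) = 0 := congrFun hmem i
      rw [hN, Matrix.fromBlocks_mulVec] at this
      simp [Matrix.mulVec, dotProduct, Function.comp, Pi.single_apply] at this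
      exact hij this
    have hlt : K < LinearMap.range N.mulVecLin :=
      lt_of_le_of_ne h1 (fun he => hvK (he ▸ hvmem))
    have hfr : Module.finrank F K = r := by
      have hsurj : Function.Surjective (LinearMap.funLeft F F (Sum.inr : Fin m → Fin r ⊕ Fin m)) :=
        LinearMap.funLeft_surjective_of_injective F F _ Sum.inr_injective
      have := LinearMap.finrank_range_add_finrank_ker
        (LinearMap.funLeft F F (Sum.inr : Fin m → Fin r ⊕ Fin m))
      rw [LinearMap.range_eq_top.mpr hsurj, finrank_top] at this
      simp only [Module.finrank_pi, Fintype.card_sum, Fintype.card_fin] at this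
      rw [← hK] at this
      omega
    have := Submodule.finrank_lt_finrank_of_lt hlt
    rw [hfr] at this
    have : r < r := by
      calc r < Module.finrank F (LinearMap.range N.mulVecLin) := this
        _ = N.rank := rfl
        _ = r := hrank2
    omega
  have hD : D = C * ⅟A * B := sub_eq_zero.mp hS0
  rwa [Matrix.invOf_eq_nonsing_inv] at hD

/-- Let `M = [[M₁₁, M₁₂], [M₂₁, M₂₂]]` with `M₁₁ ∈ K^{r×r}` invertible and `rank M = r`.
If `M₁₁ = L·R·U` with `L` lower triangular invertible, `U` upper triangular invertible and
`R` a permutation matrix, then `M₂₂ = (M₂₁ U⁻¹)·R⁻¹·(L⁻¹ M₁₂)` and `M = C·R·E` with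
`C = [L; M₂₁U⁻¹Rᵀ]` and `E = [U  RᵀL⁻¹M₁₂]`. -/
theorem cre_from_invertible_leading_block {F : Type*} [Field F] {r m n : ℕ}
    (M11 : Matrix (Fin r) (Fin r) F) (M12 : Matrix (Fin r) (Fin n) F)
    (M21 : Matrix (Fin m) (Fin r) F) (M22 : Matrix (Fin m) (Fin n) F)
    (hM11 : IsUnit M11)
    (hrank : (Matrix.fromBlocks M11 M12 M21 M22).rank = r)
    (L U R : Matrix (Fin r) (Fin r) F)
    (hL : ∀ i j : Fin r, i < j → L i j = 0) (hLu : IsUnit L)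
    (hU : ∀ i j : Fin r, j < i → U i j = 0) (hUu : IsUnit U)
    (hR : IsPermMatrix R)
    (hfac : M11 = L * R * U) :
    M22 = (M21 * U⁻¹) * R⁻¹ * (L⁻¹ * M12) ∧
    Matrix.fromBlocks M11 M12 M21 M22 =
      vcat L (M21 * U⁻¹ * Rᵀ) * R * hcat U (Rᵀ * L⁻¹ * M12) := by
  obtain ⟨σ, hσ⟩ := hR
  have hRRt : R * Rᵀ = 1 := by
    ext i j
    simp only [Matrix.mul_apply, Matrix.transpose_apply, hσ, Matrix.one_apply]
    simp only [ite_mul, one_mul, zero_mul, eq_comm (a := σ i)]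
    rw [Finset.sum_ite_eq' Finset.univ (σ i)]
    simp [σ.injective.eq_iff, eq_comm]
  have hRtR : Rᵀ * R = 1 := mul_eq_one_comm.mp hRRt
  have hRinv : R⁻¹ = Rᵀ := Matrix.inv_eq_right_inv hRRt
  have hL1 : L * L⁻¹ = 1 := Matrix.mul_nonsing_inv L ((Matrix.isUnit_iff_isUnit_det L).mp hLu)
  have hU1 : U * U⁻¹ = 1 := Matrix.mul_nonsing_inv U ((Matrix.isUnit_iff_isUnit_det U).mp hUu)
  have hU2 : U⁻¹ * U = 1 := Matrix.nonsing_inv_mul U ((Matrix.isUnit_iff_isUnit_det U).mp hUu)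
  have hM11inv : M11⁻¹ = U⁻¹ * Rᵀ * L⁻¹ := by
    apply Matrix.inv_eq_right_inv
    rw [hfac]
    calc L * R * U * (U⁻¹ * Rᵀ * L⁻¹)
        = L * R * (U * U⁻¹) * Rᵀ * L⁻¹ := by simp only [Matrix.mul_assoc]
      _ = L * (R * Rᵀ) * L⁻¹ := by rw [hU1]; simp only [Matrix.mul_one, Matrix.mul_assoc]
      _ = 1 := by rw [hRRt, Matrix.mul_one, hL1]
  have hschur := schur_of_rank M11 M12 M21 M22 hM11 hrank
  have h22 : M22 = (M21 * U⁻¹) * R⁻¹ * (L⁻¹ * M12) := by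
    rw [hschur, hM11inv, hRinv]
    simp only [Matrix.mul_assoc]
  refine ⟨h22, ?_⟩
  rw [vcat_mul, vcat_mul_hcat]
  have b11 : L * R * U = M11 := hfac.symm
  have b12 : L * R * (Rᵀ * L⁻¹ * M12) = M12 := by
    calc L * R * (Rᵀ * L⁻¹ * M12) = L * (R * Rᵀ) * L⁻¹ * M12 := by simp only [Matrix.mul_assoc]
      _ = M12 := by rw [hRRt, Matrix.mul_one, hL1, Matrix.one_mul]
  have b21 : M21 * U⁻¹ * Rᵀ * R * U = M21 := by
    calc M21 * U⁻¹ * Rᵀ * R * U = M21 * U⁻¹ * (Rᵀ * R) * U := by simp only [Matrix.mul_assoc]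
      _ = M21 := by rw [hRtR, Matrix.mul_one, Matrix.mul_assoc, hU2, Matrix.mul_one]
  have b22 : M21 * U⁻¹ * Rᵀ * R * (Rᵀ * L⁻¹ * M12) = M22 := by
    rw [h22, hRinv]
    calc M21 * U⁻¹ * Rᵀ * R * (Rᵀ * L⁻¹ * M12)
        = M21 * U⁻¹ * (Rᵀ * R) * (Rᵀ * L⁻¹ * M12) := by simp only [Matrix.mul_assoc]
      _ = M21 * U⁻¹ * Rᵀ * (L⁻¹ * M12) := by
          rw [hRtR, Matrix.mul_one]; simp only [Matrix.mul_assoc]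
  rw [b11, b12, b21, b22]
end
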